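/- arXiv:0710.5934 — 2 statements merged into one kernel-verified Lean document; each statement's English description precedes it below -/
import Mathlib

section
/- Let e₀ > 0, 0 < c₁ ≤ e₀, C₀ > 0 and t₀ ∈ ℝ. Let β : [t₀,∞) → ℝ be twice differentiable with |β''(t) − e₀²β(t)| ≤ C₀ e^{−c₁ t} for all t ≥ t₀, and β(t) → 0 as t → +∞. Then there exists C > 0 such that: if c₁ < e₀, |β(t)| ≤ C e^{−c₁ t} for all t ≥ t₀; and if c₁ = e₀, |β(t)| ≤ C (1+|t|) e^{−c₁ t} for all t ≥ t₀. -/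
open Set Filter Real

lemma myMono {a : ℝ} {f f' : ℝ → ℝ}
    (hf : ∀ t ∈ Ici a, HasDerivWithinAt f (f' t) (Ici a) t)
    (h : ∀ t ∈ Ici a, 0 ≤ f' t) : MonotoneOn f (Ici a) := by
  apply monotoneOn_of_deriv_nonneg (convex_Ici a)
    (fun t ht => (hf t ht).continuousWithinAt)
  · intro t ht
    rw [interior_Ici] at ht
    exact ((hf t (mem_Ici.mpr (le_of_lt ht))).hasDerivAt (Ici_mem_nhds ht)).differentiableAt.differentiableWithinAt
  · intro t ht
    rw [interior_Ici] at ht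
    rw [((hf t (mem_Ici.mpr (le_of_lt ht))).hasDerivAt (Ici_mem_nhds ht)).deriv]
    exact h t (mem_Ici.mpr (le_of_lt ht))

lemma myBound {a : ℝ} {f f' Φ Φ' : ℝ → ℝ}
    (hf : ∀ t ∈ Ici a, HasDerivWithinAt f (f' t) (Ici a) t)
    (hΦ : ∀ t ∈ Ici a, HasDerivWithinAt Φ (Φ' t) (Ici a) t)
    (hb : ∀ t ∈ Ici a, |f' t| ≤ Φ' t) :
    ∀ t ∈ Ici a, |f t - f a| ≤ Φ t - Φ a := by
  have h1 : MonotoneOn (fun t => Φ t - f t) (Ici a) := by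
    apply myMono (fun t ht => (hΦ t ht).sub (hf t ht))
    intro t ht
    have := abs_le.1 (hb t ht)
    linarith [this.2]
  have h2 : MonotoneOn (fun t => Φ t + f t) (Ici a) := by
    apply myMono (fun t ht => (hΦ t ht).add (hf t ht))
    intro t ht
    have := abs_le.1 (hb t ht)
    linarith [this.1]
  intro t ht
  have e1 := h1 self_mem_Ici ht ht
  have e2 := h2 self_mem_Ici ht ht
  simp only at e1 e2
  rw [abs_le]
  constructor <;> linarith

lemma myLimBound {a : ℝ} {f f' ψ ψ' : ℝ → ℝ}
    (hf : ∀ t ∈ Ici a, HasDerivWithinAt f (f' t) (Ici a) t)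
    (hψ : ∀ t ∈ Ici a, HasDerivWithinAt ψ (ψ' t) (Ici a) t)
    (hb : ∀ t ∈ Ici a, |f' t| ≤ -ψ' t)
    (hf0 : Tendsto f atTop (nhds 0)) (hψ0 : Tendsto ψ atTop (nhds 0)) :
    ∀ t ∈ Ici a, |f t| ≤ ψ t := by
  have h1 : MonotoneOn (fun t => f t - ψ t) (Ici a) := by
    apply myMono (fun t ht => (hf t ht).sub (hψ t ht))
    intro t ht
    have := abs_le.1 (hb t ht)
    linarith [this.1]
  have h2 : MonotoneOn (fun t => -f t - ψ t) (Ici a) := by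
    apply myMono (fun t ht => ((hf t ht).neg).sub (hψ t ht))
    intro t ht
    have := abs_le.1 (hb t ht)
    linarith [this.2]
  intro t ht
  have l1 : f t - ψ t ≤ 0 - 0 := by
    apply ge_of_tendsto (hf0.sub hψ0)
    filter_upwards [eventually_ge_atTop t] with s hs
    exact h1 ht (le_trans ht hs) hs
  have l2 : -f t - ψ t ≤ -0 - 0 := by
    apply ge_of_tendsto ((hf0.neg).sub hψ0)
    filter_upwards [eventually_ge_atTop t] with s hs
    exact h2 ht (le_trans ht hs) hs
  norm_num at l1 l2
  rw [abs_le]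
  constructor <;> linarith

lemma myLinExp {b : ℝ} (hb : 0 < b) :
    Tendsto (fun t => t * Real.exp (-(b * t))) atTop (nhds 0) := by
  have h1 := (tendsto_pow_mul_exp_neg_atTop_nhds_zero 1).comp
    (tendsto_id.const_mul_atTop hb)
  have h2 := h1.const_mul (1 / b)
  rw [mul_zero] at h2
  refine h2.congr fun t => ?_
  simp only [Function.comp_apply, pow_one, id]
  field_simp

lemma expE (a b t : ℝ) : Real.exp (a * t) * Real.exp (b * t) = Real.exp ((a + b) * t) := by
  rw [← Real.exp_add]; congr 1; ring

/-- if `β'' = e₀²β + O(e^{-c₁t})` with `0 < c₁ ≤ e₀` and `β(t) → 0` at `+∞`,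
then `β(t) = O(e^{-c₁t})` when `c₁ < e₀`, and `β(t) = O((1+|t|)e^{-c₁t})` when `c₁ = e₀`. -/
theorem stmt16 (e₀ c₁ C₀ t₀ : ℝ) (he₀ : 0 < e₀) (hc₁ : 0 < c₁) (hle : c₁ ≤ e₀) (hC₀ : 0 < C₀)
    (β β₁ β₂ : ℝ → ℝ)
    (hβ : ∀ t ∈ Set.Ici t₀, HasDerivWithinAt β (β₁ t) (Set.Ici t₀) t)
    (hβ₁ : ∀ t ∈ Set.Ici t₀, HasDerivWithinAt β₁ (β₂ t) (Set.Ici t₀) t)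
    (hineq : ∀ t ∈ Set.Ici t₀, |β₂ t - e₀ ^ 2 * β t| ≤ C₀ * Real.exp (-c₁ * t))
    (hlim : Filter.Tendsto β Filter.atTop (nhds 0)) :
    ∃ C > 0,
      (c₁ < e₀ → ∀ t ∈ Set.Ici t₀, |β t| ≤ C * Real.exp (-c₁ * t)) ∧
      (c₁ = e₀ → ∀ t ∈ Set.Ici t₀, |β t| ≤ C * (1 + |t|) * Real.exp (-c₁ * t)) := by
  -- g := β₁ - e₀ β
  have hg : ∀ t ∈ Ici t₀, HasDerivWithinAt (fun t => β₁ t - e₀ * β t)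
      (β₂ t - e₀ * β₁ t) (Ici t₀) t :=
    fun t ht => (hβ₁ t ht).sub ((hβ t ht).const_mul e₀)
  -- u := e^{e₀ t} g
  have hu : ∀ t ∈ Ici t₀, HasDerivWithinAt (fun t => Real.exp (e₀ * t) * (β₁ t - e₀ * β t))
      (Real.exp (e₀ * t) * (β₂ t - e₀ ^ 2 * β t)) (Ici t₀) t := by
    intro t ht
    have he : HasDerivWithinAt (fun t => Real.exp (e₀ * t))
        (Real.exp (e₀ * t) * e₀) (Ici t₀) t := by
      have h0 := (((hasDerivAt_id t).const_mul e₀).exp).hasDerivWithinAt (s := Ici t₀)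
      simpa using h0
    have := he.mul (hg t ht)
    exact this.congr_deriv (by ring)
  have hub : ∀ t ∈ Ici t₀, |Real.exp (e₀ * t) * (β₂ t - e₀ ^ 2 * β t)|
      ≤ C₀ * Real.exp ((e₀ - c₁) * t) := by
    intro t ht
    rw [abs_mul, abs_of_pos (Real.exp_pos _)]
    calc Real.exp (e₀ * t) * |β₂ t - e₀ ^ 2 * β t|
        ≤ Real.exp (e₀ * t) * (C₀ * Real.exp (-c₁ * t)) :=
          mul_le_mul_of_nonneg_left (hineq t ht) (Real.exp_pos _).le
      _ = C₀ * (Real.exp (e₀ * t) * Real.exp ((-c₁) * t)) := by ring_nf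
      _ = C₀ * Real.exp ((e₀ - c₁) * t) := by rw [expE]; congr 2 <;> ring
  -- v := e^{-e₀ t} β
  have hv : ∀ t ∈ Ici t₀, HasDerivWithinAt (fun t => Real.exp ((-e₀) * t) * β t)
      (Real.exp ((-e₀) * t) * (β₁ t - e₀ * β t)) (Ici t₀) t := by
    intro t ht
    have he : HasDerivWithinAt (fun t => Real.exp ((-e₀) * t))
        (Real.exp ((-e₀) * t) * (-e₀)) (Ici t₀) t := by
      have h0 := (((hasDerivAt_id t).const_mul (-e₀)).exp).hasDerivWithinAt (s := Ici t₀)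
      simpa using h0
    have := he.mul (hβ t ht)
    exact this.congr_deriv (by ring)
  have hexp0 : ∀ b : ℝ, 0 < b → Tendsto (fun t => Real.exp ((-b) * t)) atTop (nhds 0) := by
    intro b hb
    apply Real.tendsto_exp_atBot.comp
    have h1 : Tendsto (fun t : ℝ => b * t) atTop atTop := tendsto_id.const_mul_atTop hb
    have h2 := tendsto_neg_atTop_atBot.comp h1
    refine h2.congr fun t => ?_
    simp [Function.comp]
  have hv0 : Tendsto (fun t => Real.exp ((-e₀) * t) * β t) atTop (nhds 0) := by
    have := (hexp0 e₀ he₀).mul hlim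
    simpa using this
  have hβv : ∀ t : ℝ, β t = Real.exp (e₀ * t) * (Real.exp ((-e₀) * t) * β t) := by
    intro t
    rw [← mul_assoc, expE]
    norm_num
  rcases lt_or_eq_of_le hle with hlt | heq
  · -- case c₁ < e₀
    have hδ : 0 < e₀ - c₁ := sub_pos.mpr hlt
    have hΦ : ∀ t ∈ Ici t₀, HasDerivWithinAt (fun t => C₀ / (e₀ - c₁) * Real.exp ((e₀ - c₁) * t))
        (C₀ * Real.exp ((e₀ - c₁) * t)) (Ici t₀) t := by
      intro t ht
      have he := ((((hasDerivAt_id t).const_mul (e₀ - c₁)).exp).const_mul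
        (C₀ / (e₀ - c₁))).hasDerivWithinAt (s := Ici t₀)
      simp only [id_eq, mul_one] at he
      have hne : e₀ - c₁ ≠ 0 := ne_of_gt hδ
      have hval : C₀ * Real.exp ((e₀ - c₁) * t)
          = C₀ / (e₀ - c₁) * (Real.exp ((e₀ - c₁) * t) * (e₀ - c₁)) := by
        field_simp
      rw [hval]
      exact he
    have key := myBound hu hΦ hub
    set M := |Real.exp (e₀ * t₀) * (β₁ t₀ - e₀ * β t₀)| with hM
    set K₁ := M * Real.exp ((c₁ - e₀) * t₀) + C₀ / (e₀ - c₁) with hK₁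
    have hK₁pos : 0 < K₁ := by positivity
    have hgb : ∀ t ∈ Ici t₀, |β₁ t - e₀ * β t| ≤ K₁ * Real.exp ((-c₁) * t) := by
      intro t ht
      have h1 := key t ht
      have h2 : |Real.exp (e₀ * t) * (β₁ t - e₀ * β t)|
          ≤ M + C₀ / (e₀ - c₁) * Real.exp ((e₀ - c₁) * t) := by
        have := abs_sub_abs_le_abs_sub (Real.exp (e₀ * t) * (β₁ t - e₀ * β t))
          (Real.exp (e₀ * t₀) * (β₁ t₀ - e₀ * β t₀))
        have hp : (0:ℝ) < C₀ / (e₀ - c₁) * Real.exp ((e₀ - c₁) * t₀) := by positivity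
        linarith
      have h3 : |β₁ t - e₀ * β t| = Real.exp ((-e₀) * t) * |Real.exp (e₀ * t) * (β₁ t - e₀ * β t)| := by
        rw [abs_mul, abs_of_pos (Real.exp_pos _), ← mul_assoc, expE]
        norm_num
      rw [h3]
      calc Real.exp ((-e₀) * t) * |Real.exp (e₀ * t) * (β₁ t - e₀ * β t)|
          ≤ Real.exp ((-e₀) * t) * (M + C₀ / (e₀ - c₁) * Real.exp ((e₀ - c₁) * t)) :=
            mul_le_mul_of_nonneg_left h2 (Real.exp_pos _).le
        _ = M * Real.exp ((-e₀) * t) + C₀ / (e₀ - c₁) * (Real.exp ((e₀ - c₁) * t) * Real.exp ((-e₀) * t)) := by ring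
        _ = M * (Real.exp ((c₁ - e₀) * t) * Real.exp ((-c₁) * t)) + C₀ / (e₀ - c₁) * Real.exp ((-c₁) * t) := by
            rw [expE, expE]; congr 3 <;> ring
        _ ≤ M * (Real.exp ((c₁ - e₀) * t₀) * Real.exp ((-c₁) * t)) + C₀ / (e₀ - c₁) * Real.exp ((-c₁) * t) := by
            have : Real.exp ((c₁ - e₀) * t) ≤ Real.exp ((c₁ - e₀) * t₀) := by
              apply Real.exp_le_exp.mpr
              have : c₁ - e₀ ≤ 0 := by linarith
              nlinarith [mem_Ici.mp ht]
            have hM0 : 0 ≤ M := by rw [hM]; positivity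
            gcongr
        _ = K₁ * Real.exp ((-c₁) * t) := by rw [hK₁]; ring
    -- step B
    have hψ : ∀ t ∈ Ici t₀, HasDerivWithinAt
        (fun t => K₁ / (e₀ + c₁) * Real.exp ((-(e₀ + c₁)) * t))
        (-(K₁ * Real.exp ((-(e₀ + c₁)) * t))) (Ici t₀) t := by
      intro t ht
      have he := ((((hasDerivAt_id t).const_mul (-(e₀ + c₁))).exp).const_mul
        (K₁ / (e₀ + c₁))).hasDerivWithinAt (s := Ici t₀)
      simp only [id_eq, mul_one] at he
      have hne : e₀ + c₁ ≠ 0 := by positivity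
      have hval : -(K₁ * Real.exp ((-(e₀ + c₁)) * t))
          = K₁ / (e₀ + c₁) * (Real.exp ((-(e₀ + c₁)) * t) * (-(e₀ + c₁))) := by
        field_simp
      rw [hval]
      exact he
    have hbB : ∀ t ∈ Ici t₀, |Real.exp ((-e₀) * t) * (β₁ t - e₀ * β t)|
        ≤ -(-(K₁ * Real.exp ((-(e₀ + c₁)) * t))) := by
      intro t ht
      rw [neg_neg, abs_mul, abs_of_pos (Real.exp_pos _)]
      calc Real.exp ((-e₀) * t) * |β₁ t - e₀ * β t|
          ≤ Real.exp ((-e₀) * t) * (K₁ * Real.exp ((-c₁) * t)) :=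
            mul_le_mul_of_nonneg_left (hgb t ht) (Real.exp_pos _).le
        _ = K₁ * (Real.exp ((-e₀) * t) * Real.exp ((-c₁) * t)) := by ring
        _ = K₁ * Real.exp ((-(e₀ + c₁)) * t) := by rw [expE]; congr 2 <;> ring
    have hψ0 : Tendsto (fun t => K₁ / (e₀ + c₁) * Real.exp ((-(e₀ + c₁)) * t)) atTop (nhds 0) := by
      have := (hexp0 (e₀ + c₁) (by positivity)).const_mul (K₁ / (e₀ + c₁))
      simpa using this
    have hvb := myLimBound hv hψ hbB hv0 hψ0
    refine ⟨K₁ / (e₀ + c₁), by positivity, fun _ t ht => ?_, fun h => absurd h (ne_of_lt hlt)⟩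
    have h1 := hvb t ht
    calc |β t| = Real.exp (e₀ * t) * |Real.exp ((-e₀) * t) * β t| := by
          rw [abs_mul, abs_of_pos (Real.exp_pos _), ← mul_assoc, expE]; norm_num
      _ ≤ Real.exp (e₀ * t) * (K₁ / (e₀ + c₁) * Real.exp ((-(e₀ + c₁)) * t)) :=
          mul_le_mul_of_nonneg_left h1 (Real.exp_pos _).le
      _ = K₁ / (e₀ + c₁) * (Real.exp (e₀ * t) * Real.exp ((-(e₀ + c₁)) * t)) := by ring
      _ = K₁ / (e₀ + c₁) * Real.exp (-c₁ * t) := by rw [expE]; congr 2 <;> ring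
  · -- case c₁ = e₀
    subst heq
    have hub' : ∀ t ∈ Ici t₀, |Real.exp (c₁ * t) * (β₂ t - c₁ ^ 2 * β t)| ≤ C₀ := by
      intro t ht
      have := hub t ht
      simpa using this
    have hΦ : ∀ t ∈ Ici t₀, HasDerivWithinAt (fun t => C₀ * t) C₀ (Ici t₀) t := by
      intro t ht
      have := ((hasDerivAt_id t).const_mul C₀).hasDerivWithinAt (s := Ici t₀)
      simpa using this
    have key := myBound hu (fun t ht => hΦ t ht) (fun t ht => hub' t ht)
    set M := |Real.exp (c₁ * t₀) * (β₁ t₀ - c₁ * β t₀)| with hM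
    set A := M - C₀ * t₀ with hA
    have hApos : ∀ t ∈ Ici t₀, 0 ≤ A + C₀ * t := by
      intro t ht
      have : t₀ ≤ t := ht
      have hM0 : 0 ≤ M := abs_nonneg _
      rw [hA]
      nlinarith
    have hgb : ∀ t ∈ Ici t₀, |β₁ t - c₁ * β t| ≤ (A + C₀ * t) * Real.exp ((-c₁) * t) := by
      intro t ht
      have h1 := key t ht
      have h2 : |Real.exp (c₁ * t) * (β₁ t - c₁ * β t)| ≤ A + C₀ * t := by
        have := abs_sub_abs_le_abs_sub (Real.exp (c₁ * t) * (β₁ t - c₁ * β t))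
          (Real.exp (c₁ * t₀) * (β₁ t₀ - c₁ * β t₀))
        rw [hA]
        linarith
      have h3 : |β₁ t - c₁ * β t| = Real.exp ((-c₁) * t) * |Real.exp (c₁ * t) * (β₁ t - c₁ * β t)| := by
        rw [abs_mul, abs_of_pos (Real.exp_pos _), ← mul_assoc, expE]
        norm_num
      rw [h3]
      calc Real.exp ((-c₁) * t) * |Real.exp (c₁ * t) * (β₁ t - c₁ * β t)|
          ≤ Real.exp ((-c₁) * t) * (A + C₀ * t) :=
            mul_le_mul_of_nonneg_left h2 (Real.exp_pos _).le
        _ = (A + C₀ * t) * Real.exp ((-c₁) * t) := by ring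
    -- step B
    set γ := C₀ / (2 * c₁) with hγ
    set α := (A + γ) / (2 * c₁) with hα
    have hγpos : 0 < γ := by positivity
    have hψ : ∀ t ∈ Ici t₀, HasDerivWithinAt
        (fun t => (α + γ * t) * Real.exp ((-(2 * c₁)) * t))
        (-((A + C₀ * t) * Real.exp ((-(2 * c₁)) * t))) (Ici t₀) t := by
      intro t ht
      have hlin : HasDerivWithinAt (fun t => α + γ * t) γ (Ici t₀) t := by
        have := ((hasDerivAt_id t).const_mul γ).const_add α
        simpa using this.hasDerivWithinAt (s := Ici t₀)
      have he : HasDerivWithinAt (fun t => Real.exp ((-(2 * c₁)) * t))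
          (Real.exp ((-(2 * c₁)) * t) * (-(2 * c₁))) (Ici t₀) t := by
        have h0 := (((hasDerivAt_id t).const_mul (-(2 * c₁))).exp).hasDerivWithinAt (s := Ici t₀)
        simpa using h0
      have := hlin.mul he
      refine this.congr_deriv ?_
      have h2c : (2 : ℝ) * c₁ ≠ 0 := by positivity
      rw [hα, hγ]
      field_simp
      ring
    have hbB : ∀ t ∈ Ici t₀, |Real.exp ((-c₁) * t) * (β₁ t - c₁ * β t)|
        ≤ -(-((A + C₀ * t) * Real.exp ((-(2 * c₁)) * t))) := by
      intro t ht
      rw [neg_neg, abs_mul, abs_of_pos (Real.exp_pos _)]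
      calc Real.exp ((-c₁) * t) * |β₁ t - c₁ * β t|
          ≤ Real.exp ((-c₁) * t) * ((A + C₀ * t) * Real.exp ((-c₁) * t)) :=
            mul_le_mul_of_nonneg_left (hgb t ht) (Real.exp_pos _).le
        _ = (A + C₀ * t) * (Real.exp ((-c₁) * t) * Real.exp ((-c₁) * t)) := by ring
        _ = (A + C₀ * t) * Real.exp ((-(2 * c₁)) * t) := by rw [expE]; congr 2 <;> ring
    have hψ0 : Tendsto (fun t => (α + γ * t) * Real.exp ((-(2 * c₁)) * t)) atTop (nhds 0) := by
      have h1 := (hexp0 (2 * c₁) (by positivity)).const_mul α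
      have h2 := (myLinExp (b := 2 * c₁) (by positivity)).const_mul γ
      have h3 := h1.add h2
      norm_num at h3
      refine h3.congr fun t => ?_
      have : -(2 * c₁ * t) = (-(2 * c₁)) * t := by ring
      rw [this]
      ring
    have hvb := myLimBound hv hψ hbB hv0 hψ0
    refine ⟨|α| + γ + 1, by positivity, fun h => absurd h (lt_irrefl c₁), fun _ t ht => ?_⟩
    have h1 := hvb t ht
    have h4 : |β t| ≤ (α + γ * t) * Real.exp ((-c₁) * t) := by
      calc |β t| = Real.exp (c₁ * t) * |Real.exp ((-c₁) * t) * β t| := by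
            rw [abs_mul, abs_of_pos (Real.exp_pos _), ← mul_assoc, expE]; norm_num
        _ ≤ Real.exp (c₁ * t) * ((α + γ * t) * Real.exp ((-(2 * c₁)) * t)) :=
            mul_le_mul_of_nonneg_left h1 (Real.exp_pos _).le
        _ = (α + γ * t) * (Real.exp (c₁ * t) * Real.exp ((-(2 * c₁)) * t)) := by ring
        _ = (α + γ * t) * Real.exp ((-c₁) * t) := by rw [expE]; congr 2 <;> ring
    have h5 : α + γ * t ≤ (|α| + γ + 1) * (1 + |t|) := by
      nlinarith [le_abs_self α, le_abs_self t, abs_nonneg t, abs_nonneg α,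
        mul_nonneg hγpos.le (sub_nonneg.mpr (le_abs_self t))]
    calc |β t| ≤ (α + γ * t) * Real.exp ((-c₁) * t) := h4
      _ ≤ (|α| + γ + 1) * (1 + |t|) * Real.exp ((-c₁) * t) := by
          nlinarith [Real.exp_pos ((-c₁) * t)]
      _ = (|α| + γ + 1) * (1 + |t|) * Real.exp (-c₁ * t) := by norm_num
end

section
/- Let N ∈ {3,4,5}, let W be the Aubin–Talenti function, and define for f : ℝ^N → ℝ the nonlinear remainder R(f) := |W+f|^{4/(N−2)}(W+f) − W^{(N+2)/(N−2)} − ((N+2)/(N−2))W^{4/(N−2)}f. Then there exists a constant C > 0 such that for every f ∈ L^{2N/(N−2)}(ℝ^N), ‖R(f)‖_{L^{2N/(N+2)}} ≤ C(‖f‖_{L^{2N/(N−2)}}² + ‖f‖_{L^{2N/(N−2)}}^{(N+2)/(N−2)}). -/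
open MeasureTheory

/-- The Aubin-Talenti function `W(x) = (1 + |x|^2/(N(N-2)))^{-(N-2)/2}` on `R^N`. -/
noncomputable def W (N : ℕ) (x : EuclideanSpace ℝ (Fin N)) : ℝ :=
  (1 + ‖x‖ ^ 2 / ((N : ℝ) * ((N : ℝ) - 2))) ^ (-(((N : ℝ) - 2) / 2))

/-- The `L^p(ℝ^N)` norm (with real exponent `p`). -/
noncomputable def Lnorm {N : ℕ} (p : ℝ) (f : EuclideanSpace ℝ (Fin N) → ℝ) : ℝ :=
  (eLpNorm f (ENNReal.ofReal p) volume).toReal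

/-- The nonlinear remainder `R(f) = |W+f|^{4/(N-2)}(W+f) - W^{(N+2)/(N-2)}
- ((N+2)/(N-2)) W^{4/(N-2)} f`. -/
noncomputable def Rnl (N : ℕ) (f : EuclideanSpace ℝ (Fin N) → ℝ)
    (x : EuclideanSpace ℝ (Fin N)) : ℝ :=
  |W N x + f x| ^ ((4 : ℝ) / ((N : ℝ) - 2)) * (W N x + f x)
    - (W N x) ^ (((N : ℝ) + 2) / ((N : ℝ) - 2))
    - (((N : ℝ) + 2) / ((N : ℝ) - 2)) * (W N x) ^ ((4 : ℝ) / ((N : ℝ) - 2)) * f x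

open scoped ENNReal NNReal


/-- MVT bound for `rpow` on a positive interval. -/
lemma rpow_lip {α c d : ℝ} (hα : 1 ≤ α) (hc : 0 < c) {x y : ℝ}
    (hx : x ∈ Set.Icc c d) (hy : y ∈ Set.Icc c d) :
    |x ^ α - y ^ α| ≤ α * d ^ (α - 1) * |x - y| := by
  have h := Convex.norm_image_sub_le_of_norm_hasDerivWithin_le
    (f := fun s : ℝ => s ^ α) (f' := fun s : ℝ => α * s ^ (α - 1)) (C := α * d ^ (α - 1))
    (fun s hs => (Real.hasDerivAt_rpow_const
      (Or.inl (hc.trans_le hs.1).ne')).hasDerivWithinAt)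
    (fun s hs => by
      have hs0 : 0 < s := hc.trans_le hs.1
      have h1 : s ^ (α - 1) ≤ d ^ (α - 1) :=
        Real.rpow_le_rpow hs0.le hs.2 (by linarith)
      have h2 : (0:ℝ) ≤ s ^ (α - 1) := Real.rpow_nonneg hs0.le _
      rw [Real.norm_eq_abs, abs_of_nonneg (by positivity)]
      exact mul_le_mul_of_nonneg_left h1 (by linarith))
    (convex_Icc c d) hy hx
  simpa [Real.norm_eq_abs] using h

/-- Pointwise quadratic estimate on the remainder. -/
lemma ptwise {α : ℝ} (hα : 1 ≤ α) {a b : ℝ} (ha : 0 < a) :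
    |(|a + b|) ^ α * (a + b) - a ^ (α + 1) - (α + 1) * a ^ α * b| ≤
      ((3:ℝ) ^ (α+1) + 2 ^ (α+1) + (α+1) * 2 ^ α + (α+1) * α * 2 ^ (α-1)) *
        (a ^ (α - 1) * b ^ 2 + |b| ^ (α + 1)) := by
  have hα1 : (0:ℝ) < α + 1 := by linarith
  have hC1 : (0:ℝ) < (3:ℝ) ^ (α+1) := Real.rpow_pos_of_pos (by norm_num) _
  have hC2 : (0:ℝ) < (2:ℝ) ^ (α+1) := Real.rpow_pos_of_pos (by norm_num) _
  have hC3 : (0:ℝ) < (2:ℝ) ^ α := Real.rpow_pos_of_pos (by norm_num) _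
  have hC4 : (0:ℝ) < (2:ℝ) ^ (α-1) := Real.rpow_pos_of_pos (by norm_num) _
  have hterm1 : (0:ℝ) ≤ a ^ (α - 1) * b ^ 2 := by positivity
  have hterm2 : (0:ℝ) ≤ |b| ^ (α + 1) := Real.rpow_nonneg (abs_nonneg _) _
  rcases le_or_gt a (2 * |b|) with hcase | hcase
  · -- large perturbation: everything is ≲ |b|^{α+1}
    have hb : b ≠ 0 := by
      intro h; rw [h] at hcase; simp at hcase; linarith
    have hb0 : 0 < |b| := abs_pos.mpr hb
    have habs : |a + b| ≤ 3 * |b| := by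
      calc |a + b| ≤ |a| + |b| := abs_add_le _ _
        _ ≤ 3 * |b| := by rw [abs_of_pos ha]; linarith
    have e1 : |(|a + b|) ^ α * (a + b)| = |a + b| ^ (α + 1) := by
      rcases eq_or_ne (a + b) 0 with h | h
      · simp [h, Real.zero_rpow hα1.ne']
      · rw [abs_mul, abs_of_nonneg (Real.rpow_nonneg (abs_nonneg _) _)]
        exact (Real.rpow_add_one (abs_ne_zero.mpr h) α).symm
    have t1 : |a + b| ^ (α + 1) ≤ 3 ^ (α+1) * |b| ^ (α + 1) := by
      calc |a + b| ^ (α + 1) ≤ (3 * |b|) ^ (α + 1) :=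
            Real.rpow_le_rpow (abs_nonneg _) habs hα1.le
        _ = 3 ^ (α+1) * |b| ^ (α + 1) := Real.mul_rpow (by norm_num) (abs_nonneg _)
    have t2 : a ^ (α + 1) ≤ 2 ^ (α+1) * |b| ^ (α + 1) := by
      calc a ^ (α + 1) ≤ (2 * |b|) ^ (α + 1) := Real.rpow_le_rpow ha.le hcase hα1.le
        _ = 2 ^ (α+1) * |b| ^ (α + 1) := Real.mul_rpow (by norm_num) (abs_nonneg _)
    have t3 : (α + 1) * a ^ α * |b| ≤ (α+1) * 2 ^ α * |b| ^ (α + 1) := by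
      have : a ^ α ≤ (2 * |b|) ^ α := Real.rpow_le_rpow ha.le hcase (by linarith)
      have h2 : (2 * |b|) ^ α = 2 ^ α * |b| ^ α := Real.mul_rpow (by norm_num) (abs_nonneg _)
      have h3 : |b| ^ α * |b| = |b| ^ (α + 1) := (Real.rpow_add_one (abs_ne_zero.mpr hb) α).symm
      calc (α + 1) * a ^ α * |b| ≤ (α + 1) * (2 ^ α * |b| ^ α) * |b| :=
            mul_le_mul_of_nonneg_right
              (mul_le_mul_of_nonneg_left (h2 ▸ this) (by linarith)) (abs_nonneg _)
        _ = (α+1) * 2 ^ α * (|b| ^ α * |b|) := by ring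
        _ = (α+1) * 2 ^ α * |b| ^ (α + 1) := by rw [h3]
    have tri : |(|a + b|) ^ α * (a + b) - a ^ (α + 1) - (α + 1) * a ^ α * b| ≤
        |(|a + b|) ^ α * (a + b)| + a ^ (α + 1) + (α + 1) * a ^ α * |b| := by
      have h1 := abs_sub (|a + b| ^ α * (a + b) - a ^ (α + 1)) ((α + 1) * a ^ α * b)
      have h2 := abs_sub (|a + b| ^ α * (a + b)) (a ^ (α + 1))
      have h3 : |a ^ (α + 1)| = a ^ (α+1) := abs_of_nonneg (Real.rpow_nonneg ha.le _)
      have h4 : |(α + 1) * a ^ α * b| = (α + 1) * a ^ α * |b| := by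
        rw [abs_mul]
        congr 1
        exact abs_of_nonneg (by positivity)
      calc _ ≤ |(|a + b|) ^ α * (a + b) - a ^ (α + 1)| + |(α + 1) * a ^ α * b| := h1
        _ ≤ _ := by rw [h4]; have := h2; rw [h3] at this; linarith
    rw [e1] at tri
    have hmono : (3:ℝ) ^ (α+1) * |b| ^ (α + 1) + 2 ^ (α+1) * |b| ^ (α + 1)
        + (α+1) * 2 ^ α * |b| ^ (α + 1) ≤
        ((3:ℝ) ^ (α+1) + 2 ^ (α+1) + (α+1) * 2 ^ α + (α+1) * α * 2 ^ (α-1)) *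
        (a ^ (α - 1) * b ^ 2 + |b| ^ (α + 1)) := by
      nlinarith [mul_nonneg hC1.le hterm1, mul_nonneg hC2.le hterm1,
        mul_nonneg (mul_nonneg (by linarith : (0:ℝ) ≤ α + 1) hC3.le) hterm1,
        mul_nonneg (mul_nonneg (mul_nonneg (by linarith : (0:ℝ) ≤ α + 1)
          (by linarith : (0:ℝ) ≤ α)) hC4.le) hterm1,
        mul_nonneg (mul_nonneg (mul_nonneg (by linarith : (0:ℝ) ≤ α + 1)
          (by linarith : (0:ℝ) ≤ α)) hC4.le) hterm2]
    linarith
  · -- small perturbation: Taylor estimate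
    have hb2 : |b| < a / 2 := by linarith
    have habpos : ∀ t ∈ Set.Icc (-|b|) |b|, 0 < a + t := by
      intro t ht
      have := neg_abs_le b
      have := abs_nonneg b
      nlinarith [ht.1, ht.2]
    set h : ℝ → ℝ := fun t => (a + t) ^ (α + 1) - a ^ (α + 1) - (α + 1) * a ^ α * t with hh
    have hderiv : ∀ t ∈ Set.Icc (-|b|) |b|, HasDerivWithinAt h
        ((α + 1) * (a + t) ^ α - (α + 1) * a ^ α) (Set.Icc (-|b|) |b|) t := by
      intro t ht
      have h1 : HasDerivAt (fun t : ℝ => a + t) 1 t := by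
        simpa using (hasDerivAt_id t).const_add a
      have h2 : HasDerivAt (fun t : ℝ => (a + t) ^ (α + 1))
          (1 * (α + 1) * (a + t) ^ (α + 1 - 1)) t :=
        h1.rpow_const (Or.inl (habpos t ht).ne')
      have h3 : HasDerivAt h ((α + 1) * (a + t) ^ α - (α + 1) * a ^ α) t := by
        have := (h2.sub_const (a ^ (α + 1))).sub
          ((hasDerivAt_id t).const_mul ((α + 1) * a ^ α))
        simpa [hh, add_sub_cancel_right, mul_comm, mul_assoc, Pi.sub_def] using this
      exact h3.hasDerivWithinAt
    have hbound : ∀ t ∈ Set.Icc (-|b|) |b|,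
        ‖(α + 1) * (a + t) ^ α - (α + 1) * a ^ α‖ ≤
          (α + 1) * (α * (2*a) ^ (α - 1) * |b|) := by
      intro t ht
      have hat : a + t ∈ Set.Icc (a/2) (2*a) := by
        constructor
        · nlinarith [ht.1, neg_abs_le b]
        · nlinarith [ht.2, abs_nonneg b]
      have haa : a ∈ Set.Icc (a/2) (2*a) := by constructor <;> linarith
      have := rpow_lip hα (by linarith : (0:ℝ) < a/2) hat haa
      have ht' : |a + t - a| ≤ |b| := by
        rw [add_sub_cancel_left]
        exact abs_le.mpr ⟨ht.1, ht.2⟩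
      rw [Real.norm_eq_abs, ← mul_sub, abs_mul, abs_of_pos hα1]
      have hpos : (0:ℝ) ≤ α * (2*a) ^ (α - 1) :=
        mul_nonneg (by linarith) (Real.rpow_nonneg (by linarith) _)
      have : |(a + t) ^ α - a ^ α| ≤ α * (2*a) ^ (α - 1) * |b| := by
        calc |(a + t) ^ α - a ^ α| ≤ α * (2*a) ^ (α - 1) * |a + t - a| := this
          _ ≤ α * (2*a) ^ (α - 1) * |b| := mul_le_mul_of_nonneg_left ht' hpos
      exact mul_le_mul_of_nonneg_left this (by linarith)
    have hmem_b : b ∈ Set.Icc (-|b|) |b| := ⟨neg_abs_le b, le_abs_self b⟩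
    have hmem_0 : (0:ℝ) ∈ Set.Icc (-|b|) |b| := ⟨neg_nonpos.mpr (abs_nonneg b), abs_nonneg b⟩
    have hmvt := Convex.norm_image_sub_le_of_norm_hasDerivWithin_le hderiv hbound
      (convex_Icc _ _) hmem_0 hmem_b
    have h0 : h 0 = 0 := by simp [hh]
    rw [h0, sub_zero, sub_zero, Real.norm_eq_abs, Real.norm_eq_abs] at hmvt
    -- rewrite target to h b
    have habpos' : 0 < a + b := habpos b hmem_b
    have hrw : (|a + b|) ^ α * (a + b) - a ^ (α + 1) - (α + 1) * a ^ α * b = h b := by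
      rw [abs_of_pos habpos', hh]
      have : (a + b) ^ α * (a + b) = (a + b) ^ (α + 1) :=
        (Real.rpow_add_one habpos'.ne' α).symm
      simp [this]
    rw [hrw]
    have h2a : (2*a:ℝ) ^ (α - 1) = 2 ^ (α-1) * a ^ (α-1) :=
      Real.mul_rpow (by norm_num) ha.le
    have hfin : |h b| ≤ (α + 1) * α * 2 ^ (α-1) * (a ^ (α - 1) * b ^ 2) := by
      calc |h b| ≤ (α + 1) * (α * (2*a) ^ (α - 1) * |b|) * |b| := hmvt
        _ = (α + 1) * α * (2*a) ^ (α - 1) * (|b| * |b|) := by ring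
        _ = (α + 1) * α * 2 ^ (α-1) * (a ^ (α - 1) * b ^ 2) := by
            rw [h2a, abs_mul_abs_self]; ring
    have hαa : (0:ℝ) ≤ a ^ (α-1) := Real.rpow_nonneg ha.le _
    nlinarith [mul_nonneg hC1.le hterm1, mul_nonneg hC2.le hterm1,
      mul_nonneg (mul_nonneg (by linarith : (0:ℝ) ≤ α + 1) hC3.le) hterm1,
      mul_nonneg hC1.le hterm2, mul_nonneg hC2.le hterm2,
      mul_nonneg (mul_nonneg (by linarith : (0:ℝ) ≤ α + 1) hC3.le) hterm2,
      mul_nonneg (mul_nonneg (mul_nonneg (by linarith : (0:ℝ) ≤ α + 1)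
        (by linarith : (0:ℝ) ≤ α)) hC4.le) hterm2]

section WProps
variable {N : ℕ}


lemma base_one_le (hN : 2 < N) (x : EuclideanSpace ℝ (Fin N)) :
    1 ≤ 1 + ‖x‖ ^ 2 / ((N : ℝ) * ((N : ℝ) - 2)) := by
  have h2 : (2:ℝ) < (N:ℝ) := by exact_mod_cast hN
  have : (0:ℝ) ≤ ‖x‖ ^ 2 / ((N : ℝ) * ((N : ℝ) - 2)) :=
    div_nonneg (by positivity) (by nlinarith)
  linarith

lemma W_pos (hN : 2 < N) (x : EuclideanSpace ℝ (Fin N)) : 0 < W N x :=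
  Real.rpow_pos_of_pos (by linarith [base_one_le hN x]) _

lemma W_le_one (hN : 2 < N) (x : EuclideanSpace ℝ (Fin N)) : W N x ≤ 1 := by
  have h2 : (2:ℝ) < (N:ℝ) := by exact_mod_cast hN
  exact Real.rpow_le_one_of_one_le_of_nonpos (base_one_le hN x) (by linarith)

lemma W_continuous (hN : 2 < N) : Continuous (W N) := by
  apply Continuous.rpow_const
  · fun_prop
  · exact fun x => Or.inl (by linarith [base_one_le hN x])

lemma W_memLp (hN2 : 2 < N) :
    MemLp (W N) (ENNReal.ofReal (2 * (N:ℝ) / ((N:ℝ) - 2))) volume := by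
  have h2 : (2:ℝ) < (N:ℝ) := by exact_mod_cast hN2
  set p : ℝ := 2 * (N:ℝ) / ((N:ℝ) - 2) with hp
  have hppos : 0 < p := by
    rw [hp]; exact div_pos (by linarith) (by linarith)
  set c : ℝ := (N:ℝ) * ((N:ℝ) - 2) with hc
  have hc1 : 1 ≤ c := by
    rw [hc]
    have h3N : (3:ℝ) ≤ (N:ℝ) := by exact_mod_cast Nat.succ_le_of_lt hN2
    have : (1:ℝ) * 1 ≤ (N:ℝ) * ((N:ℝ) - 2) :=
      mul_le_mul (by linarith) (by linarith) (by norm_num) (by linarith)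
    linarith
  have hWp : ∀ x, W N x ^ p = (1 + ‖x‖ ^ 2 / c) ^ (-(N:ℝ)) := by
    intro x
    rw [W, ← Real.rpow_mul (by linarith [base_one_le hN2 x])]
    congr 1
    have hne : (2 * ((N:ℝ) - 2)) ≠ 0 := by
      intro h; have : (N:ℝ) - 2 = 0 := by linarith
      linarith
    rw [hp, neg_mul, neg_inj, div_mul_div_comm, div_eq_iff hne]
    ring
  have hbound : ∀ x : EuclideanSpace ℝ (Fin N),
      W N x ^ p ≤ c ^ (N:ℝ) * ((1:ℝ) + ‖x‖ ^ 2) ^ (-(2 * (N:ℝ)) / 2) := by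
    intro x
    rw [hWp x]
    have h1 : (0:ℝ) < (1 + ‖x‖ ^ 2) / c := by positivity
    have h2' : (1 + ‖x‖ ^ 2) / c ≤ 1 + ‖x‖ ^ 2 / c := by
      rw [add_div]
      have h1c : 1 / c ≤ 1 := by rw [div_le_one (by linarith)]; linarith
      linarith
    have h3 : (1 + ‖x‖ ^ 2 / c) ^ (-(N:ℝ)) ≤ ((1 + ‖x‖ ^ 2) / c) ^ (-(N:ℝ)) :=
      Real.rpow_le_rpow_of_nonpos h1 h2' (by
        have : (0:ℝ) ≤ (N:ℝ) := by positivity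
        linarith)
    have h4 : ((1 + ‖x‖ ^ 2) / c) ^ (-(N:ℝ)) =
        c ^ (N:ℝ) * ((1:ℝ) + ‖x‖ ^ 2) ^ (-(N:ℝ)) := by
      rw [Real.div_rpow (by positivity) (by linarith),
        Real.rpow_neg (by linarith : (0:ℝ) ≤ c), div_eq_mul_inv, inv_inv, mul_comm]
    have h5 : (-(2 * (N:ℝ)) / 2) = -(N:ℝ) := by ring
    rw [h5, ← h4]
    exact h3
  have hfinrank : ((Module.finrank ℝ (EuclideanSpace ℝ (Fin N))):ℝ) < 2 * (N:ℝ) := by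
    rw [finrank_euclideanSpace_fin]
    have : (0:ℝ) < (N:ℝ) := by
      have : 0 < N := by omega
      exact_mod_cast this
    linarith
  have hint : Integrable (fun x : EuclideanSpace ℝ (Fin N) =>
      c ^ (N:ℝ) * ((1:ℝ) + ‖x‖ ^ 2) ^ (-(2 * (N:ℝ)) / 2)) volume :=
    (integrable_rpow_neg_one_add_norm_sq hfinrank).const_mul _
  have hWcont : Continuous fun x => W N x ^ p :=
    (W_continuous hN2).rpow_const (fun x => Or.inl (W_pos hN2 x).ne')
  have hWint : Integrable (fun x => W N x ^ p) volume := by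
    refine hint.mono' hWcont.aestronglyMeasurable (Filter.Eventually.of_forall fun x => ?_)
    rw [Real.norm_eq_abs, abs_of_nonneg (Real.rpow_nonneg (W_pos hN2 x).le _)]
    exact hbound x
  refine ⟨(W_continuous hN2).aestronglyMeasurable, ?_⟩
  have hnorm : (fun x => ‖W N x‖ ^ p) = fun x => W N x ^ p := by
    funext x; rw [Real.norm_eq_abs, abs_of_nonneg (W_pos hN2 x).le]
  have h1 : MemLp (fun x => ‖W N x‖ ^ p) 1 volume := by
    rw [hnorm]; exact memLp_one_iff_integrable.mpr hWint
  have h2' := eLpNorm_norm_rpow (W N) hppos (p := 1) (μ := volume)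
  rw [one_mul] at h2'
  have h3 : eLpNorm (W N) (ENNReal.ofReal p) volume ^ p < ⊤ := by
    rw [← h2']; exact h1.2
  exact (ENNReal.rpow_lt_top_iff_of_pos hppos).mp h3

end WProps

lemma ofReal_inv_split {s t u : ℝ} (hs : 0 < s) (ht : 0 < t) (hu : 0 < u)
    (h : 1/s = 1/t + 1/u) :
    1/(ENNReal.ofReal s) = 1/(ENNReal.ofReal t) + 1/(ENNReal.ofReal u) := by
  rw [one_div, one_div, one_div, ← ENNReal.ofReal_inv_of_pos hs,
    ← ENNReal.ofReal_inv_of_pos ht, ← ENNReal.ofReal_inv_of_pos hu,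
    ← ENNReal.ofReal_add (by positivity) (by positivity)]
  congr 1
  simpa [one_div] using h

set_option maxHeartbeats 1000000 in
theorem stmt17 (N : ℕ) (hN : N = 3 ∨ N = 4 ∨ N = 5) :
    ∃ C > 0, ∀ f : EuclideanSpace ℝ (Fin N) → ℝ,
      MemLp f (ENNReal.ofReal ((2 * (N : ℝ)) / ((N : ℝ) - 2))) volume →
      Lnorm ((2 * (N : ℝ)) / ((N : ℝ) + 2)) (Rnl N f) ≤
        C * (Lnorm ((2 * (N : ℝ)) / ((N : ℝ) - 2)) f ^ 2 +
          Lnorm ((2 * (N : ℝ)) / ((N : ℝ) - 2)) f ^ (((N : ℝ) + 2) / ((N : ℝ) - 2))) := by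
  have hN2 : 2 < N := by rcases hN with h | h | h <;> omega
  have hN6 : N < 6 := by rcases hN with h | h | h <;> omega
  have h2 : (2:ℝ) < (N:ℝ) := by exact_mod_cast hN2
  have h6 : (N:ℝ) < 6 := by exact_mod_cast hN6
  set α : ℝ := (4:ℝ) / ((N:ℝ) - 2) with hαdef
  have hα : 1 ≤ α := by
    rw [hαdef, le_div_iff₀ (by linarith)]; linarith
  have hα1 : 0 < α - 1 := by
    rw [hαdef]
    have : 1 < (4:ℝ) / ((N:ℝ) - 2) := by rw [lt_div_iff₀ (by linarith)]; linarith
    linarith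
  set p : ℝ := (2 * (N:ℝ)) / ((N:ℝ) - 2) with hpdef
  set q : ℝ := (2 * (N:ℝ)) / ((N:ℝ) + 2) with hqdef
  set r : ℝ := (2 * (N:ℝ)) / (6 - (N:ℝ)) with hrdef
  have hppos : 0 < p := by rw [hpdef]; exact div_pos (by linarith) (by linarith)
  have hqpos : 0 < q := by rw [hqdef]; exact div_pos (by linarith) (by linarith)
  have hrpos : 0 < r := by rw [hrdef]; exact div_pos (by linarith) (by linarith)
  have hq1 : (1:ℝ) ≤ q := by rw [hqdef, le_div_iff₀ (by linarith)]; linarith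
  set P : ℝ≥0∞ := ENNReal.ofReal p with hP
  set Q : ℝ≥0∞ := ENNReal.ofReal q with hQ
  set Rr : ℝ≥0∞ := ENNReal.ofReal r with hRr
  set P2 : ℝ≥0∞ := ENNReal.ofReal (p/2) with hP2
  have hexp : ((N:ℝ) + 2) / ((N:ℝ) - 2) = α + 1 := by
    rw [hαdef, div_add' _ _ _ (by linarith : ((N:ℝ) - 2) ≠ 0)]
    ring_nf
  -- the constant from the pointwise bound
  set C₀ : ℝ := (3:ℝ) ^ (α+1) + 2 ^ (α+1) + (α+1) * 2 ^ α + (α+1) * α * 2 ^ (α-1) with hC₀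
  have hC₀pos : 0 < C₀ := by
    have h1 : (0:ℝ) < (3:ℝ) ^ (α+1) := Real.rpow_pos_of_pos (by norm_num) _
    have h2' : (0:ℝ) < (2:ℝ) ^ (α+1) := Real.rpow_pos_of_pos (by norm_num) _
    have h3 : (0:ℝ) < (2:ℝ) ^ α := Real.rpow_pos_of_pos (by norm_num) _
    have h4 : (0:ℝ) < (2:ℝ) ^ (α-1) := Real.rpow_pos_of_pos (by norm_num) _
    have h5 : (0:ℝ) < (α+1) * 2 ^ α := mul_pos (by linarith) h3
    have h6' : (0:ℝ) < (α+1) * α * 2 ^ (α-1) :=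
      mul_pos (mul_pos (by linarith) (by linarith)) h4
    rw [hC₀]; linarith
  -- the W^{α-1} weight and its L^r norm
  have hWm : Measurable (W N) := (W_continuous hN2).measurable
  set A : ℝ≥0∞ := eLpNorm (fun x => W N x ^ (α-1)) Rr volume with hA
  have hAeq : A = eLpNorm (W N) P volume ^ (α-1) := by
    have h1 : (fun x => W N x ^ (α-1)) = fun x => ‖W N x‖ ^ (α-1) := by
      funext x; rw [Real.norm_eq_abs, abs_of_nonneg (W_pos hN2 x).le]
    rw [hA, h1, eLpNorm_norm_rpow (W N) hα1]
    congr 2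
    rw [hRr, hP, ← ENNReal.ofReal_mul hrpos.le]
    congr 1
    rw [hrdef, hpdef, hαdef]
    have hne1 : (6:ℝ) - (N:ℝ) ≠ 0 := by linarith
    have hne2 : ((N:ℝ) - 2) ≠ 0 := by linarith
    field_simp
    ring
  have hAfin : A < ⊤ := by
    rw [hAeq]
    exact ENNReal.rpow_lt_top_of_nonneg (by linarith) (W_memLp hN2).2.ne
  -- choose the constant
  refine ⟨(C₀ + 1) * (A.toReal + 1), by positivity, fun f hf => ?_⟩
  have hfm : AEMeasurable f volume := hf.1.aemeasurable
  set E : ℝ≥0∞ := eLpNorm f P volume with hE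
  have hEfin : E < ⊤ := hf.2
  -- pointwise bound
  set g1 : EuclideanSpace ℝ (Fin N) → ℝ := fun x => W N x ^ (α-1) * f x ^ 2 with hg1
  set g2 : EuclideanSpace ℝ (Fin N) → ℝ := fun x => |f x| ^ (α+1) with hg2
  have hg1m : AEMeasurable g1 volume := by rw [hg1]; fun_prop
  have hg2m : AEMeasurable g2 volume := by rw [hg2]; fun_prop
  have hRnlm : AEMeasurable (Rnl N f) volume := by
    unfold Rnl; fun_prop
  have hg1nn : ∀ x, 0 ≤ g1 x := fun x =>
    mul_nonneg (Real.rpow_nonneg (W_pos hN2 x).le _) (sq_nonneg _)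
  have hg2nn : ∀ x, 0 ≤ g2 x := fun x => Real.rpow_nonneg (abs_nonneg _) _
  have hkey : ∀ x, |Rnl N f x| ≤ C₀ * (g1 x + g2 x) := by
    intro x
    have := ptwise hα (a := W N x) (b := f x) (W_pos hN2 x)
    have hR : Rnl N f x = |W N x + f x| ^ α * (W N x + f x) - W N x ^ (α+1)
        - (α+1) * W N x ^ α * f x := by
      rw [Rnl, hexp, ← hαdef]
    rw [hR, hg1, hg2, hC₀]
    exact this
  -- step 1: eLpNorm mono
  have step1 : eLpNorm (Rnl N f) Q volume ≤
      eLpNorm (fun x => C₀ * (g1 x + g2 x)) Q volume := by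
    apply eLpNorm_mono
    intro x
    rw [Real.norm_eq_abs, Real.norm_eq_abs]
    refine (hkey x).trans (le_abs_self _)
  -- step 2: pull out the constant
  have step2 : eLpNorm (fun x => C₀ * (g1 x + g2 x)) Q volume =
      (‖C₀‖₊ : ℝ≥0∞) * eLpNorm (fun x => g1 x + g2 x) Q volume := by
    have := eLpNorm_const_smul (c := C₀) (f := fun x => g1 x + g2 x) Q volume
    rw [enorm_eq_nnnorm] at this
    exact this
  -- step 3: triangle inequality
  have hQ1 : (1:ℝ≥0∞) ≤ Q := by
    rw [hQ, ← ENNReal.ofReal_one]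
    exact ENNReal.ofReal_le_ofReal hq1
  have step3 : eLpNorm (fun x => g1 x + g2 x) Q volume ≤
      eLpNorm g1 Q volume + eLpNorm g2 Q volume :=
    eLpNorm_add_le hg1m.aestronglyMeasurable hg2m.aestronglyMeasurable hQ1
  -- step 4: Hölder for g1
  have hpqr : 1/Q = 1/Rr + 1/P2 := by
    rw [hQ, hRr, hP2]
    apply ofReal_inv_split hqpos hrpos (by linarith)
    rw [hqdef, hrdef, hpdef]
    have hne0 : (N:ℝ) ≠ 0 := by linarith
    have hne1 : (6:ℝ) - (N:ℝ) ≠ 0 := by linarith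
    have hne2 : ((N:ℝ) - 2) ≠ 0 := by linarith
    have hne3 : ((N:ℝ) + 2) ≠ 0 := by linarith
    field_simp
    ring
  have step4 : eLpNorm g1 Q volume ≤ A * eLpNorm (fun x => f x ^ 2) P2 volume := by
    have h := eLpNorm_smul_le_mul_eLpNorm (μ := volume) (p := Rr) (q := P2) (r := Q)
      (f := fun x => f x ^ 2) (φ := fun x => W N x ^ (α-1))
      (by fun_prop : AEMeasurable (fun x => f x ^ 2) volume).aestronglyMeasurable
      (by fun_prop : AEMeasurable (fun x => W N x ^ (α-1)) volume).aestronglyMeasurable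
      (hpqr := ⟨by simpa only [one_div] using hpqr.symm⟩)
    have heq : (fun x => W N x ^ (α-1)) • (fun x => f x ^ 2) = g1 := by
      funext x; simp [hg1, Pi.smul_apply, smul_eq_mul]
    rw [heq] at h
    exact h
  -- step 5: compute eLpNorm of f^2
  have step5 : eLpNorm (fun x => f x ^ 2) P2 volume = E ^ (2:ℝ) := by
    have h1 : (fun x => f x ^ 2) = fun x => ‖f x‖ ^ (2:ℝ) := by
      funext x
      rw [Real.norm_eq_abs, Real.rpow_two, sq_abs]
    rw [h1, eLpNorm_norm_rpow f (by norm_num : (0:ℝ) < 2)]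
    have h2' : ENNReal.ofReal (p/2) * ENNReal.ofReal 2 = P := by
      rw [hP, ← ENNReal.ofReal_mul (by positivity)]
      congr 1
      ring
    rw [h2', hE]
  -- step 6: compute eLpNorm of |f|^{α+1}
  have step6 : eLpNorm g2 Q volume = E ^ (α+1) := by
    have h1 : g2 = fun x => ‖f x‖ ^ (α+1) := by
      funext x; rw [hg2, Real.norm_eq_abs]
    rw [h1, eLpNorm_norm_rpow f (by linarith : (0:ℝ) < α+1)]
    have h2' : ENNReal.ofReal q * ENNReal.ofReal (α+1) = P := by
      rw [hP, ← ENNReal.ofReal_mul hqpos.le]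
      congr 1
      rw [hqdef, hpdef, hαdef]
      have hne2 : ((N:ℝ) - 2) ≠ 0 := by linarith
      have hne3 : ((N:ℝ) + 2) ≠ 0 := by linarith
      field_simp
      ring
    rw [h2', hE]
  -- combine in ℝ≥0∞
  have total : eLpNorm (Rnl N f) Q volume ≤
      (‖C₀‖₊ : ℝ≥0∞) * (A * E ^ (2:ℝ) + E ^ (α+1)) := by
    calc eLpNorm (Rnl N f) Q volume
        ≤ eLpNorm (fun x => C₀ * (g1 x + g2 x)) Q volume := step1
      _ = (‖C₀‖₊ : ℝ≥0∞) * eLpNorm (fun x => g1 x + g2 x) Q volume := step2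
      _ ≤ (‖C₀‖₊ : ℝ≥0∞) * (eLpNorm g1 Q volume + eLpNorm g2 Q volume) := by
          exact mul_le_mul_right step3 _
      _ ≤ (‖C₀‖₊ : ℝ≥0∞) * (A * E ^ (2:ℝ) + E ^ (α+1)) := by
          apply mul_le_mul_right
          apply add_le_add
          · rw [← step5]; exact step4
          · rw [← step6]
  -- finiteness of the RHS
  have hE2fin : E ^ (2:ℝ) < ⊤ := ENNReal.rpow_lt_top_of_nonneg (by norm_num) hEfin.ne
  have hEαfin : E ^ (α+1) < ⊤ := ENNReal.rpow_lt_top_of_nonneg (by linarith) hEfin.ne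
  have hRHSfin : (‖C₀‖₊ : ℝ≥0∞) * (A * E ^ (2:ℝ) + E ^ (α+1)) < ⊤ := by
    apply ENNReal.mul_lt_top ENNReal.coe_lt_top
    exact ENNReal.add_lt_top.mpr ⟨ENNReal.mul_lt_top hAfin hE2fin, hEαfin⟩
  -- convert to real
  have htoReal := ENNReal.toReal_mono hRHSfin.ne total
  have hLnormQ : Lnorm ((2 * (N : ℝ)) / ((N : ℝ) + 2)) (Rnl N f) =
      (eLpNorm (Rnl N f) Q volume).toReal := by rw [Lnorm, hQ, hqdef]
  have hLnormP : Lnorm ((2 * (N : ℝ)) / ((N : ℝ) - 2)) f = E.toReal := by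
    rw [Lnorm, hE, hP, hpdef]
  rw [hLnormQ, hLnormP, hexp]
  refine htoReal.trans ?_
  have hrhs : ((‖C₀‖₊ : ℝ≥0∞) * (A * E ^ (2:ℝ) + E ^ (α+1))).toReal =
      C₀ * (A.toReal * E.toReal ^ 2 + E.toReal ^ (α+1)) := by
    rw [ENNReal.toReal_mul, ENNReal.toReal_add (ENNReal.mul_lt_top hAfin hE2fin).ne hEαfin.ne,
      ENNReal.toReal_mul, ← ENNReal.toReal_rpow, ← ENNReal.toReal_rpow]
    congr 2
    · simp [Real.norm_eq_abs, abs_of_pos hC₀pos]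
    · rw [Real.rpow_two]
  rw [hrhs]
  have ht1 : (0:ℝ) ≤ E.toReal ^ 2 := sq_nonneg _
  have ht2 : (0:ℝ) ≤ E.toReal ^ (α+1) := Real.rpow_nonneg ENNReal.toReal_nonneg _
  have hAnn : (0:ℝ) ≤ A.toReal := ENNReal.toReal_nonneg
  nlinarith [mul_nonneg (mul_nonneg hC₀pos.le hAnn) ht2, mul_nonneg hAnn ht1,
    mul_nonneg hAnn ht2, mul_nonneg hC₀pos.le ht1,
    mul_nonneg (mul_nonneg hC₀pos.le hAnn) ht1]
end
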